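/- Suppose A ⊆ ℤ/Nℤ has |A| = k and |A +̂ A| = m, and let Ā ⊆ {1,…,N} ⊆ ℤ be the image of A under the least positive residue map. Then the Freiman dimension satisfies r_ℚ(Ā) ≤ 4m/k. -/
import Mathlib

/-- The `F`-vector space of Freiman 2-homomorphisms from `A` to `F`. -/
def freimanHoms (F : Type*) [Field F] {G : Type*} [AddCommGroup G] (A : Set G) :
    Submodule F (A → F) where
  carrier := {φ | ∀ a b c d : A, (a : G) + b = (c : G) + d → φ a + φ b = φ c + φ d}
  add_mem' := by
    intro f g hf hg a b c d h
    have h1 := hf a b c d h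
    have h2 := hg a b c d h
    simp only [Pi.add_apply]
    linear_combination h1 + h2
  zero_mem' := by intro a b c d h; simp
  smul_mem' := by
    intro c f hf a b c' d h
    have h1 := hf a b c' d h
    simp only [Pi.smul_apply, smul_eq_mul]
    linear_combination c * h1

/-- The Freiman dimension `r_F(A) = dim Hom₂(A, F) − 1`. -/
noncomputable def freimanDim (F : Type*) [Field F] {G : Type*} [AddCommGroup G]
    (A : Set G) : ℕ :=
  Module.finrank F (freimanHoms F A) - 1

/-- A Freiman 2-homomorphism from `A` (as a subtype) to an abelian group `H`. -/
def IsFreiman2HomOn {G H : Type*} [AddCommGroup G] [AddCommGroup H] (A : Set G)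
    (φ : A → H) : Prop :=
  ∀ a b c d : A, (a : G) + b = (c : G) + d → φ a + φ b = φ c + φ d

/-- The restricted sumset `X +̂ X = {x + y : x, y ∈ X, x ≠ y}`. -/
def hatAdd {G : Type*} [AddCommGroup G] [DecidableEq G] (X : Finset G) : Finset G :=
  ((X ×ˢ X).filter fun p => p.1 ≠ p.2).image fun p => p.1 + p.2

/-- The least positive residue ("unfolding") map `ℤ/Nℤ → {1,…,N} ⊆ ℤ`. -/
def unfold (N : ℕ) (x : ZMod N) : ℤ :=
  if x = 0 then (N : ℤ) else (ZMod.val x : ℤ)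

open Finset Module

lemma mem_hatAdd {G : Type*} [AddCommGroup G] [DecidableEq G] {X : Finset G} {s : G} :
    s ∈ hatAdd X ↔ ∃ a ∈ X, ∃ b ∈ X, a ≠ b ∧ a + b = s := by
  simp only [hatAdd, Finset.mem_image, Finset.mem_filter, Finset.mem_product, Prod.exists]
  constructor
  · rintro ⟨a, b, ⟨⟨ha, hb⟩, hne⟩, h⟩; exact ⟨a, ha, b, hb, hne, h⟩
  · rintro ⟨a, ha, b, hb, hne, h⟩; exact ⟨a, b, ⟨⟨ha, hb⟩, hne⟩, h⟩

lemma finrank_freimanHoms_le (S : Finset ℤ) :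
    finrank ℚ (freimanHoms ℚ (↑S : Set ℤ)) ≤ S.card := by
  have h := Submodule.finrank_le (freimanHoms ℚ (↑S : Set ℤ))
  exact h.trans_eq (by simp [Module.finrank_pi])

/-- Vanishing propagation: a Freiman hom on `S` vanishing at the max `M` and at all `y`
with `M + y` a new sum vanishes everywhere. -/
lemma phi_eq_zero (S : Finset ℤ) (M : ℤ) (hM : M ∈ S) (hmax : ∀ y ∈ S, y ≤ M)
    (φ : (↑S : Set ℤ) → ℚ)
    (hφ : ∀ a b c d : (↑S : Set ℤ), (a : ℤ) + b = (c : ℤ) + d → φ a + φ b = φ c + φ d)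
    (hM0 : φ ⟨M, Finset.mem_coe.mpr hM⟩ = 0)
    (hnew : ∀ y, (hy : y ∈ S.erase M) → M + y ∉ hatAdd (S.erase M) →
      φ ⟨y, Finset.mem_coe.mpr (Finset.mem_of_mem_erase hy)⟩ = 0) :
    ∀ y, (hy : y ∈ S) → φ ⟨y, Finset.mem_coe.mpr hy⟩ = 0 := by
  have main : ∀ n : ℕ, ∀ y, (hy : y ∈ S) → (M - y).toNat < n →
      φ ⟨y, Finset.mem_coe.mpr hy⟩ = 0 := by
    intro n
    induction n with
    | zero => intro y hy h; exact absurd h (Nat.not_lt_zero _)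
    | succ n ihn =>
      intro y hy hlt
      by_cases hyM : y = M
      · subst hyM; exact hM0
      · have hy' : y ∈ S.erase M := Finset.mem_erase.mpr ⟨hyM, hy⟩
        by_cases hc : M + y ∈ hatAdd (S.erase M)
        · rw [mem_hatAdd] at hc
          obtain ⟨a, ha, b, hb, hab, hsum⟩ := hc
          have haS : a ∈ S := Finset.mem_of_mem_erase ha
          have hbS : b ∈ S := Finset.mem_of_mem_erase hb
          have haM : a < M := lt_of_le_of_ne (hmax a haS) (Finset.ne_of_mem_erase ha)
          have hbM : b < M := lt_of_le_of_ne (hmax b hbS) (Finset.ne_of_mem_erase hb)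
          have hyS : y ≤ M := hmax y hy
          have h4 := hφ ⟨M, Finset.mem_coe.mpr hM⟩ ⟨y, Finset.mem_coe.mpr hy⟩
            ⟨a, Finset.mem_coe.mpr haS⟩ ⟨b, Finset.mem_coe.mpr hbS⟩ hsum.symm
          have hA := ihn a haS (by omega)
          have hB := ihn b hbS (by omega)
          rw [hM0, hA, hB] at h4
          linarith
        · exact hnew y hy' hc
  intro y hy; exact main ((M - y).toNat + 1) y hy (by omega)

lemma finrank_le_erase (S : Finset ℤ) (M : ℤ) (hM : M ∈ S) :
    finrank ℚ (freimanHoms ℚ (↑S : Set ℤ)) ≤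
      finrank ℚ (freimanHoms ℚ (↑(S.erase M) : Set ℤ)) + 1 := by
  have hsub : S.erase M ⊆ S := Finset.erase_subset _ _
  let f : freimanHoms ℚ (↑S : Set ℤ) →ₗ[ℚ]
      (freimanHoms ℚ (↑(S.erase M) : Set ℤ)) × ℚ :=
    { toFun := fun φ =>
        (⟨fun y => φ.1 ⟨y.1, Finset.mem_coe.mpr (hsub (Finset.mem_coe.mp y.2))⟩,
          fun a b c d h => φ.2 ⟨a.1, _⟩ ⟨b.1, _⟩ ⟨c.1, _⟩ ⟨d.1, _⟩ h⟩,
         φ.1 ⟨M, Finset.mem_coe.mpr hM⟩)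
      map_add' := fun φ ψ => rfl
      map_smul' := fun c φ => rfl }
  have hinj : Function.Injective f := by
    rw [injective_iff_map_eq_zero]
    intro φ hφ0
    have h1 : (f φ).1 = 0 := by rw [hφ0]; rfl
    have h2 : (f φ).2 = 0 := by rw [hφ0]; rfl
    ext ⟨y, hy⟩
    have hyS : y ∈ S := Finset.mem_coe.mp hy
    by_cases hyM : y = M
    · subst hyM; exact h2
    · have hy' : y ∈ S.erase M := Finset.mem_erase.mpr ⟨hyM, hyS⟩
      have := congrFun (congrArg Subtype.val h1) ⟨y, Finset.mem_coe.mpr hy'⟩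
      exact this
  have := LinearMap.finrank_le_finrank_of_injective hinj
  rwa [Module.finrank_prod, Module.finrank_self] at this

lemma finrank_le_erase_of_collision (S : Finset ℤ) (M : ℤ) (hM : M ∈ S)
    (hcol : ∃ y ∈ S.erase M, M + y ∈ hatAdd (S.erase M)) :
    finrank ℚ (freimanHoms ℚ (↑S : Set ℤ)) ≤
      finrank ℚ (freimanHoms ℚ (↑(S.erase M) : Set ℤ)) := by
  have hsub : S.erase M ⊆ S := Finset.erase_subset _ _
  let f : freimanHoms ℚ (↑S : Set ℤ) →ₗ[ℚ] freimanHoms ℚ (↑(S.erase M) : Set ℤ) :=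
    { toFun := fun φ =>
        ⟨fun y => φ.1 ⟨y.1, Finset.mem_coe.mpr (hsub (Finset.mem_coe.mp y.2))⟩,
          fun a b c d h => φ.2 ⟨a.1, _⟩ ⟨b.1, _⟩ ⟨c.1, _⟩ ⟨d.1, _⟩ h⟩
      map_add' := fun φ ψ => rfl
      map_smul' := fun c φ => rfl }
  have hinj : Function.Injective f := by
    rw [injective_iff_map_eq_zero]
    intro φ hφ0
    have hz : ∀ y, (hy : y ∈ S.erase M) →
        φ.1 ⟨y, Finset.mem_coe.mpr (Finset.mem_of_mem_erase hy)⟩ = 0 := by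
      intro y hy
      exact congrFun (congrArg Subtype.val hφ0) ⟨y, Finset.mem_coe.mpr hy⟩
    obtain ⟨y0, hy0, hcc⟩ := hcol
    rw [mem_hatAdd] at hcc
    obtain ⟨a, ha, b, hb, hab, hsum⟩ := hcc
    have hMz : φ.1 ⟨M, Finset.mem_coe.mpr hM⟩ = 0 := by
      have h4 := φ.2 ⟨M, Finset.mem_coe.mpr hM⟩
        ⟨y0, Finset.mem_coe.mpr (Finset.mem_of_mem_erase hy0)⟩
        ⟨a, Finset.mem_coe.mpr (Finset.mem_of_mem_erase ha)⟩
        ⟨b, Finset.mem_coe.mpr (Finset.mem_of_mem_erase hb)⟩ hsum.symm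
      rw [hz y0 hy0, hz a ha, hz b hb] at h4
      linarith
    ext ⟨y, hy⟩
    have hyS : y ∈ S := Finset.mem_coe.mp hy
    by_cases hyM : y = M
    · subst hyM; exact hMz
    · exact hz y (Finset.mem_erase.mpr ⟨hyM, hyS⟩)
  exact LinearMap.finrank_le_finrank_of_injective hinj

lemma finrank_le_new (S : Finset ℤ) (M : ℤ) (hM : M ∈ S) (hmax : ∀ y ∈ S, y ≤ M) :
    finrank ℚ (freimanHoms ℚ (↑S : Set ℤ)) ≤
      ((S.erase M).filter (fun y => M + y ∉ hatAdd (S.erase M))).card + 1 := by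
  classical
  set T : Finset ℤ := (S.erase M).filter (fun y => M + y ∉ hatAdd (S.erase M)) with hT
  have hTsub : ∀ y ∈ T, y ∈ S := by
    intro y hy
    exact Finset.mem_of_mem_erase (Finset.mem_filter.mp hy).1
  let f : freimanHoms ℚ (↑S : Set ℤ) →ₗ[ℚ] ℚ × ({ y // y ∈ T } → ℚ) :=
    { toFun := fun φ =>
        (φ.1 ⟨M, Finset.mem_coe.mpr hM⟩,
         fun y => φ.1 ⟨y.1, Finset.mem_coe.mpr (hTsub y.1 y.2)⟩)
      map_add' := fun φ ψ => rfl
      map_smul' := fun c φ => rfl }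
  have hinj : Function.Injective f := by
    rw [injective_iff_map_eq_zero]
    intro φ hφ0
    have h1 : (f φ).1 = 0 := by rw [hφ0]; rfl
    have h2 : (f φ).2 = 0 := by rw [hφ0]; rfl
    have hz := phi_eq_zero S M hM hmax φ.1 φ.2 h1 ?_
    · ext ⟨y, hy⟩
      exact hz y (Finset.mem_coe.mp hy)
    · intro y hy hnotin
      have hyT : y ∈ T := Finset.mem_filter.mpr ⟨hy, hnotin⟩
      exact congrFun h2 ⟨y, hyT⟩
  have := LinearMap.finrank_le_finrank_of_injective hinj
  rw [Module.finrank_prod, Module.finrank_self, Module.finrank_pi] at this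
  simpa [add_comm] using this

lemma count_new (S : Finset ℤ) (M : ℤ) (hM : M ∈ S) (T : Finset ℤ)
    (hT : T ⊆ S.erase M) (hTnew : ∀ y ∈ T, M + y ∉ hatAdd (S.erase M)) :
    (hatAdd (S.erase M)).card + T.card ≤ (hatAdd S).card := by
  classical
  have hsub : S.erase M ⊆ S := Finset.erase_subset _ _
  have hU : hatAdd (S.erase M) ∪ T.image (fun y => M + y) ⊆ hatAdd S := by
    intro s hs
    rcases Finset.mem_union.mp hs with hs | hs
    · rw [mem_hatAdd] at hs ⊢
      obtain ⟨a, ha, b, hb, hab, hsum⟩ := hs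
      exact ⟨a, hsub ha, b, hsub hb, hab, hsum⟩
    · obtain ⟨y, hy, rfl⟩ := Finset.mem_image.mp hs
      have hy' := hT hy
      rw [mem_hatAdd]
      exact ⟨M, hM, y, Finset.mem_of_mem_erase hy',
        (Finset.ne_of_mem_erase hy').symm, rfl⟩
  have hdisj : Disjoint (hatAdd (S.erase M)) (T.image (fun y => M + y)) := by
    rw [Finset.disjoint_right]
    intro s hs
    obtain ⟨y, hy, rfl⟩ := Finset.mem_image.mp hs
    exact hTnew y hy
  have himg : (T.image (fun y => M + y)).card = T.card :=
    Finset.card_image_of_injective _ (fun a b h => by omega)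
  calc (hatAdd (S.erase M)).card + T.card
      = (hatAdd (S.erase M) ∪ T.image (fun y => M + y)).card := by
        rw [Finset.card_union_of_disjoint hdisj, himg]
    _ ≤ (hatAdd S).card := Finset.card_le_card hU

lemma key_ineq (S : Finset ℤ) :
    S.card * finrank ℚ (freimanHoms ℚ (↑S : Set ℤ)) ≤ 2 * (hatAdd S).card + S.card := by
  induction S using Finset.strongInductionOn with
  | _ S ih =>
  by_cases hS : S.card ≤ 1
  · have hd := finrank_freimanHoms_le S
    have : S.card * finrank ℚ (freimanHoms ℚ (↑S : Set ℤ)) ≤ S.card * S.card :=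
      Nat.mul_le_mul le_rfl hd
    have h2 : S.card * S.card ≤ 1 * S.card := Nat.mul_le_mul hS le_rfl
    omega
  · push_neg at hS
    have hne : S.Nonempty := by rw [← Finset.card_pos]; omega
    set M := S.max' hne with hMdef
    have hM : M ∈ S := S.max'_mem hne
    have hmax : ∀ y ∈ S, y ≤ M := fun y hy => S.le_max' y hy
    have hss : S.erase M ⊂ S := Finset.erase_ssubset hM
    have hIH := ih (S.erase M) hss
    have hcard : (S.erase M).card + 1 = S.card := Finset.card_erase_add_one hM
    set d := finrank ℚ (freimanHoms ℚ (↑S : Set ℤ)) with hd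
    set d' := finrank ℚ (freimanHoms ℚ (↑(S.erase M) : Set ℤ)) with hd'
    by_cases hcol : ∃ y ∈ S.erase M, M + y ∈ hatAdd (S.erase M)
    · have h1 : d ≤ d' := finrank_le_erase_of_collision S M hM hcol
      have h2 : d ≤ ((S.erase M).filter (fun y => M + y ∉ hatAdd (S.erase M))).card + 1 :=
        finrank_le_new S M hM hmax
      have h3 := count_new S M hM _ (Finset.filter_subset _ _)
        (fun y hy => (Finset.mem_filter.mp hy).2)
      have e1 : S.card * d = (S.erase M).card * d + d := by rw [← hcard]; ring
      have e2 : (S.erase M).card * d ≤ (S.erase M).card * d' := Nat.mul_le_mul le_rfl h1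
      linarith
    · push_neg at hcol
      have h1 : d ≤ d' + 1 := finrank_le_erase S M hM
      have hdk : d ≤ S.card := finrank_freimanHoms_le S
      have h3 := count_new S M hM (S.erase M) le_rfl hcol
      have e1 : S.card * d = (S.erase M).card * d + d := by rw [← hcard]; ring
      have e2 : (S.erase M).card * d ≤ (S.erase M).card * (d' + 1) := Nat.mul_le_mul le_rfl h1
      have e3 : (S.erase M).card * (d' + 1) = (S.erase M).card * d' + (S.erase M).card := by ring
      linarith

lemma unfold_injective (N : ℕ) (hN : 0 < N) : Function.Injective (unfold N) := by
  haveI : NeZero N := ⟨hN.ne'⟩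
  intro x y h
  unfold unfold at h
  split_ifs at h with h1 h2 h2
  · rw [h1, h2]
  · have := ZMod.val_lt y; omega
  · have := ZMod.val_lt x; omega
  · have : x.val = y.val := by exact_mod_cast h
    exact ZMod.val_injective N this

lemma unfold_cast (N : ℕ) [NeZero N] (a : ZMod N) : ((unfold N a : ℤ) : ZMod N) = a := by
  unfold unfold
  split_ifs with h
  · simp [h]
  · push_cast
    simp [ZMod.natCast_val, ZMod.cast_id]

lemma unfold_bounds (N : ℕ) (hN : 0 < N) (a : ZMod N) : 1 ≤ unfold N a ∧ unfold N a ≤ N := by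
  haveI : NeZero N := ⟨hN.ne'⟩
  unfold unfold
  split_ifs with h
  · omega
  · have h1 := ZMod.val_lt a
    have h2 : a.val ≠ 0 := fun hc => h ((ZMod.val_eq_zero a).mp hc)
    omega

/-- If `A ⊆ ℤ/Nℤ` has `|A| = k ≥ 1` and `|A +̂ A| = m`, then the lift `Ā ⊆ {1,…,N}` of `A`
under the least positive residue map has Freiman dimension `r_ℚ(Ā) ≤ 4m/k`. -/
theorem freimanDim_unfold_le (N : ℕ) (hN : 0 < N) (A : Finset (ZMod N)) (k m : ℕ)
    (hk : A.card = k) (hk1 : 1 ≤ k) (hm : (hatAdd A).card = m) :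
    (freimanDim ℚ ((A.image (unfold N) : Finset ℤ) : Set ℤ) : ℝ) ≤ 4 * (m : ℝ) / k := by
  classical
  haveI : NeZero N := ⟨hN.ne'⟩
  set Ab : Finset ℤ := A.image (unfold N) with hAb
  have hcard : Ab.card = k := by
    rw [hAb, Finset.card_image_of_injective _ (unfold_injective N hN), hk]
  have hAbmem : ∀ x ∈ Ab, 1 ≤ x ∧ x ≤ (N : ℤ) := by
    intro x hx
    obtain ⟨a, _, rfl⟩ := Finset.mem_image.mp hx
    exact unfold_bounds N hN a
  -- |Ā +̂ Ā| ≤ 2m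
  have hbound : (hatAdd Ab).card ≤ 2 * m := by
    have hmap : ∀ s ∈ hatAdd Ab,
        (((s : ℤ) : ZMod N), decide (s ≤ (N : ℤ))) ∈ (hatAdd A) ×ˢ (Finset.univ : Finset Bool) := by
      intro s hs
      rw [mem_hatAdd] at hs
      obtain ⟨x, hx, y, hy, hxy, hsum⟩ := hs
      obtain ⟨a, haA, rfl⟩ := Finset.mem_image.mp hx
      obtain ⟨b, hbA, rfl⟩ := Finset.mem_image.mp hy
      have hab : a ≠ b := fun hc => hxy (by rw [hc])
      rw [Finset.mem_product]
      refine ⟨?_, Finset.mem_univ _⟩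
      rw [mem_hatAdd]
      refine ⟨a, haA, b, hbA, hab, ?_⟩
      rw [← hsum]
      push_cast
      rw [unfold_cast, unfold_cast]
    have hinj : Set.InjOn (fun s : ℤ => (((s : ℤ) : ZMod N), decide (s ≤ (N : ℤ))))
        ↑(hatAdd Ab) := by
      intro s hs s' hs' h
      simp only [Prod.mk.injEq] at h
      obtain ⟨hzm, hdec⟩ := h
      have hiff : s ≤ (N : ℤ) ↔ s' ≤ (N : ℤ) := by
        constructor <;> intro hh
        · by_contra hcon
          simp [hh, hcon] at hdec
        · by_contra hcon
          simp [hh, hcon] at hdec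
      have hdvd : (N : ℤ) ∣ s' - s := by
        have := (ZMod.intCast_eq_intCast_iff _ _ _).mp hzm
        exact Int.ModEq.dvd this
      have hbs : 2 ≤ s ∧ s ≤ 2 * N := by
        rw [Finset.mem_coe, mem_hatAdd] at hs
        obtain ⟨x, hx, y, hy, _, rfl⟩ := hs
        have h1 := hAbmem x hx
        have h2 := hAbmem y hy
        omega
      have hbs' : 2 ≤ s' ∧ s' ≤ 2 * N := by
        rw [Finset.mem_coe, mem_hatAdd] at hs'
        obtain ⟨x, hx, y, hy, _, rfl⟩ := hs'
        have h1 := hAbmem x hx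
        have h2 := hAbmem y hy
        omega
      have hz : s' - s = 0 := by
        refine Int.eq_zero_of_abs_lt_dvd hdvd ?_
        rw [abs_lt]
        constructor <;> omega
      omega
    have hle := Finset.card_le_card_of_injOn _ hmap hinj
    rw [Finset.card_product, hm] at hle
    simpa [mul_comm] using hle
  -- combine
  have hkey := key_ineq Ab
  rw [hcard] at hkey
  have hr : k * freimanDim ℚ (↑Ab : Set ℤ) ≤ 4 * m := by
    unfold freimanDim
    set D := finrank ℚ (freimanHoms ℚ (↑Ab : Set ℤ)) with hD
    rcases D with _ | n
    · simp
    · simp only [Nat.add_sub_cancel]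
      have e1 : k * (n + 1) = k * n + k := by ring
      omega
  have hk0 : (0 : ℝ) < k := by exact_mod_cast hk1
  rw [le_div_iff₀ hk0]
  have : freimanDim ℚ (↑Ab : Set ℤ) * k ≤ 4 * m := by
    calc freimanDim ℚ (↑Ab : Set ℤ) * k = k * freimanDim ℚ (↑Ab : Set ℤ) := Nat.mul_comm _ _
      _ ≤ 4 * m := hr
  exact_mod_cast this
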